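/- arXiv:2604.17136 — 2 statements merged into one kernel-verified Lean document; each statement's English description precedes it below -/
import Mathlib

section
/- If for every ε > 0 and every integer k ≥ 1 the number of indices n ≤ m for which the Fibonacci number F_n is not (ε,k)-normal in base 10 is o(m) as m → ∞, then the infinite digit sequence obtained by concatenating the decimal digit strings of F_1, F_2, F_3, ... is normal in base 10. -/
open Filter

open scoped Classical

/-- Number of base-`b` digits of `x`. -/
def digLen (b x : ℕ) : ℕ := (Nat.digits b x).length

/-- The base-`b` digit string of `x`, most significant digit first. -/
def digStr (b x : ℕ) : List ℕ := (Nat.digits b x).reverse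

/-- `occ w s` : the number of sliding-window occurrences of the word `w`
in the digit string `s`. -/
def occ (w s : List ℕ) : ℕ :=
  ((List.range (s.length + 1 - w.length)).filter
    fun i => (s.drop i).take w.length = w).length

/-- A positive integer `x` is `(ε,k)`-normal in base `b` if every word `w` of
length `k` over `{0, …, b-1}` occurs in the base-`b` digit string of `x` with
frequency within `ε` of `b⁻ᵏ`. -/
def EpsKNormal (b : ℕ) (ε : ℝ) (k x : ℕ) : Prop :=
  ∀ w : List ℕ, w.length = k → (∀ d ∈ w, d < b) →
    |(occ w (digStr b x) : ℝ) / (digLen b x : ℝ) - ((b : ℝ) ^ k)⁻¹| ≤ ε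

/-- The concatenation of the base-`b` digit strings of `a 1, a 2, …, a m`. -/
def concatPrefix (b : ℕ) (a : ℕ → ℕ) (m : ℕ) : List ℕ :=
  (List.range m).flatMap fun n => digStr b (a (n + 1))

/-- The infinite digit sequence obtained by concatenating the base-`b` digit
strings of `a 1, a 2, a 3, …`. -/
def concatStream (b : ℕ) (a : ℕ → ℕ) (i : ℕ) : ℕ :=
  (concatPrefix b a (i + 1)).getD i 0

/-- An infinite digit sequence `s` is normal in base `b` if every word `w` of
length `k ≥ 1` over `{0, …, b-1}` occurs as a block in `s` with asymptotic
frequency `b⁻ᵏ`. -/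
def StreamNormal (b : ℕ) (s : ℕ → ℕ) : Prop :=
  ∀ k : ℕ, 1 ≤ k → ∀ w : List ℕ, w.length = k → (∀ d ∈ w, d < b) →
    Tendsto
      (fun M : ℕ =>
        (((Finset.range M).filter
            fun i => (List.range k).map (fun j => s (i + j)) = w).card : ℝ) / (M : ℝ))
      atTop (nhds (((b : ℝ) ^ k)⁻¹))

lemma occ_eq_card (w s : List ℕ) :
    occ w s = ((Finset.range (s.length + 1 - w.length)).filter
      fun i => (s.drop i).take w.length = w).card := by
  simp [occ, Finset.range, Finset.filter, Finset.card, Multiset.range]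

lemma occ_le_length (w s : List ℕ) (hw : 1 ≤ w.length) : occ w s ≤ s.length := by
  calc occ w s ≤ (List.range (s.length + 1 - w.length)).length :=
        List.length_filter_le _ _
    _ ≤ s.length := by rw [List.length_range]; omega

lemma window_append_left (w s t : List ℕ) {i : ℕ} (h : i + w.length ≤ s.length) :
    (((s ++ t).drop i).take w.length = w) ↔ ((s.drop i).take w.length = w) := by
  rw [List.drop_append_of_le_length (by omega), List.take_append_of_le_length]
  rw [List.length_drop]; omega

lemma window_append_right (w s t : List ℕ) (j : ℕ) :
    (((s ++ t).drop (j + s.length)).take w.length = w) ↔ ((t.drop j).take w.length = w) := by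
  rw [Nat.add_comm j s.length, List.drop_append]
  rw [List.drop_eq_nil_of_le (by omega), Nat.add_sub_cancel_left, List.nil_append]

lemma occ_append_ge (w s t : List ℕ) (hw : 1 ≤ w.length) :
    occ w s + occ w t ≤ occ w (s ++ t) := by
  classical
  set k := w.length
  set A := (Finset.range (s.length + 1 - k)).filter fun i => (s.drop i).take k = w with hA
  set B := (Finset.range (t.length + 1 - k)).filter fun i => (t.drop i).take k = w with hB
  set C := (Finset.range ((s ++ t).length + 1 - k)).filter
      fun i => ((s ++ t).drop i).take k = w with hC
  rw [occ_eq_card, occ_eq_card, occ_eq_card]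
  have hsub : A ∪ B.image (· + s.length) ⊆ C := by
    intro i hi
    rcases Finset.mem_union.mp hi with hi | hi
    · rw [hA, Finset.mem_filter, Finset.mem_range] at hi
      rw [hC, Finset.mem_filter, Finset.mem_range, List.length_append]
      refine ⟨by omega, ?_⟩
      rw [window_append_left w s t (by omega)]
      exact hi.2
    · rw [Finset.mem_image] at hi
      obtain ⟨j, hj, rfl⟩ := hi
      rw [hB, Finset.mem_filter, Finset.mem_range] at hj
      rw [hC, Finset.mem_filter, Finset.mem_range, List.length_append]
      refine ⟨by omega, ?_⟩
      rw [window_append_right w s t j]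
      exact hj.2
  have hdisj : Disjoint A (B.image (· + s.length)) := by
    rw [Finset.disjoint_left]
    intro i hi hi'
    rw [hA, Finset.mem_filter, Finset.mem_range] at hi
    rw [Finset.mem_image] at hi'
    obtain ⟨j, _, rfl⟩ := hi'
    omega
  calc A.card + B.card = A.card + (B.image (· + s.length)).card := by
        rw [Finset.card_image_of_injective _ (add_left_injective s.length)]
    _ = (A ∪ B.image (· + s.length)).card := (Finset.card_union_of_disjoint hdisj).symm
    _ ≤ C.card := Finset.card_le_card hsub

lemma occ_append_le (w s t : List ℕ) (hw : 1 ≤ w.length) :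
    occ w (s ++ t) ≤ occ w s + occ w t + w.length := by
  classical
  set k := w.length
  set A := (Finset.range (s.length + 1 - k)).filter fun i => (s.drop i).take k = w with hA
  set B := (Finset.range (t.length + 1 - k)).filter fun i => (t.drop i).take k = w with hB
  set C := (Finset.range ((s ++ t).length + 1 - k)).filter
      fun i => ((s ++ t).drop i).take k = w with hC
  rw [occ_eq_card, occ_eq_card, occ_eq_card]
  have hsub : C ⊆ (A ∪ B.image (· + s.length)) ∪ Finset.Ico (s.length + 1 - k) s.length := by
    intro i hi
    rw [hC, Finset.mem_filter, Finset.mem_range, List.length_append] at hi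
    rcases le_or_gt (i + k) s.length with hc | hc
    · refine Finset.mem_union_left _ (Finset.mem_union_left _ ?_)
      rw [hA, Finset.mem_filter, Finset.mem_range]
      exact ⟨by omega, (window_append_left w s t hc).mp hi.2⟩
    · rcases le_or_gt s.length i with hc2 | hc2
      · refine Finset.mem_union_left _ (Finset.mem_union_right _ ?_)
        rw [Finset.mem_image]
        refine ⟨i - s.length, ?_, by omega⟩
        rw [hB, Finset.mem_filter, Finset.mem_range]
        constructor
        · omega
        · have := (window_append_right w s t (i - s.length)).mp
          rw [show i - s.length + s.length = i by omega] at this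
          exact this hi.2
      · exact Finset.mem_union_right _ (Finset.mem_Ico.mpr ⟨by omega, hc2⟩)
  calc C.card ≤ ((A ∪ B.image (· + s.length)) ∪ Finset.Ico (s.length + 1 - k) s.length).card :=
        Finset.card_le_card hsub
    _ ≤ (A ∪ B.image (· + s.length)).card + (Finset.Ico (s.length + 1 - k) s.length).card :=
        Finset.card_union_le _ _
    _ ≤ (A.card + (B.image (· + s.length)).card) + (Finset.Ico (s.length + 1 - k) s.length).card := by
        exact Nat.add_le_add_right (Finset.card_union_le _ _) _
    _ ≤ A.card + B.card + k := by
        have h1 := Finset.card_image_le (s := B) (f := (· + s.length))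
        have h2 : (Finset.Ico (s.length + 1 - k) s.length).card ≤ k := by
          rw [Nat.card_Ico]; omega
        omega

lemma occ_prefix_le (w s t : List ℕ) (hw : 1 ≤ w.length) (h : s <+: t) :
    occ w s ≤ occ w t := by
  obtain ⟨r, rfl⟩ := h
  calc occ w s ≤ occ w s + occ w r := Nat.le_add_right _ _
    _ ≤ occ w (s ++ r) := occ_append_ge w s r hw

lemma window_eq_take (P : List ℕ) (k : ℕ) : ∀ i, i + k ≤ P.length →
    (List.range k).map (fun j => P.getD (i + j) 0) = (P.drop i).take k := by
  induction k with
  | zero => simp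
  | succ k ih =>
    intro i h
    rw [List.range_succ_eq_map, List.map_cons, List.map_map]
    have hi : i < P.length := by omega
    rw [List.drop_eq_getElem_cons hi, List.take_succ_cons]
    congr 1
    · rw [Nat.add_zero, List.getD_eq_getElem P 0 hi]
    · have := ih (i + 1) (by omega)
      rw [← this]
      congr 1
      funext j
      simp only [Function.comp_apply]
      congr 1
      omega


noncomputable def ell (n : ℕ) : ℕ := digLen 10 (Nat.fib n)
noncomputable def blk (n : ℕ) : List ℕ := digStr 10 (Nat.fib n)
noncomputable def CP (m : ℕ) : List ℕ := concatPrefix 10 (fun n => Nat.fib n) m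
noncomputable def LL (m : ℕ) : ℕ := (CP m).length


lemma CP_zero : CP 0 = [] := by simp [CP, concatPrefix]

lemma CP_succ (m : ℕ) : CP (m + 1) = CP m ++ blk (m + 1) := by
  simp [CP, concatPrefix, List.range_succ, blk]

lemma blk_length (n : ℕ) : (blk n).length = ell n := by
  simp [blk, ell, digStr, digLen]

lemma LL_succ (m : ℕ) : LL (m + 1) = LL m + ell (m + 1) := by
  simp [LL, CP_succ, blk_length]

lemma ell_pos (n : ℕ) (hn : 1 ≤ n) : 1 ≤ ell n := by
  have h0 : Nat.fib n ≠ 0 := by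
    have := Nat.fib_pos.mpr hn
    omega
  have h1 : Nat.digits 10 (Nat.fib n) ≠ [] := Nat.digits_ne_nil_iff_ne_zero.mpr h0
  simp only [ell, digLen]
  exact List.length_pos_iff.mpr h1

lemma LL_ge (m : ℕ) : m ≤ LL m := by
  induction m with
  | zero => simp [LL, CP_zero]
  | succ m ih =>
    rw [LL_succ]
    have := ell_pos (m + 1) (by omega)
    omega

lemma LL_mono_add (a j : ℕ) : LL a + j ≤ LL (a + j) := by
  induction j with
  | zero => simp
  | succ j ih =>
    rw [show a + (j+1) = (a+j)+1 by ring, LL_succ]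
    have := ell_pos (a + j + 1) (by omega)
    omega

lemma CP_prefix {m m' : ℕ} (h : m ≤ m') : CP m <+: CP m' := by
  induction m' with
  | zero => rw [Nat.le_zero.mp h]
  | succ m' ih =>
    rcases Nat.lt_or_ge m (m' + 1) with h' | h'
    · exact (ih (by omega)).trans (CP_succ m' ▸ List.prefix_append _ _)
    · rw [show m = m' + 1 by omega]

lemma getD_of_prefix {s t : List ℕ} (h : s <+: t) {i : ℕ} (hi : i < s.length) :
    t.getD i 0 = s.getD i 0 := by
  obtain ⟨r, rfl⟩ := h
  exact List.getD_append s r 0 i hi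

lemma stream_eq (i m : ℕ) (h : i < LL m) :
    concatStream 10 (fun n => Nat.fib n) i = (CP m).getD i 0 := by
  show (CP (i+1)).getD i 0 = (CP m).getD i 0
  have h' : i < (CP m).length := h
  rcases le_or_gt m (i + 1) with hc | hc
  · rw [getD_of_prefix (CP_prefix hc) h']
  · have h2 : i < (CP (i+1)).length := by
      have := LL_ge (i+1)
      show i < LL (i+1)
      omega
    rw [getD_of_prefix (CP_prefix (by omega : i + 1 ≤ m)) h2]

-- digit length bounds
lemma fib_lt_pow (n : ℕ) : Nat.fib n < 10 ^ n := by
  induction n using Nat.twoStepInduction with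
  | zero => simp
  | one => simp
  | more n ih1 ih2 =>
    rw [Nat.fib_add_two]
    have h1 : 10 ^ (n + 1) = 10 * 10 ^ n := by ring
    have h2 : 10 ^ (n + 2) = 100 * 10 ^ n := by ring
    omega

lemma ell_le (n : ℕ) : ell n ≤ n := by
  rcases Nat.eq_zero_or_pos n with rfl | hn
  · simp [ell, digLen]
  by_contra hcon
  push_neg at hcon
  have hfib : Nat.fib n ≠ 0 := by have := Nat.fib_pos.mpr hn; omega
  have h1 : 10 ^ (ell n) ≤ 10 * Nat.fib n :=
    Nat.base_pow_length_digits_le 10 (Nat.fib n) (by norm_num) hfib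
  have h2 : 10 ^ (n + 1) ≤ 10 ^ (ell n) := Nat.pow_le_pow_right (by norm_num) (by omega)
  have h3 : 10 ^ (n + 1) = 10 * 10 ^ n := by ring
  have := fib_lt_pow n
  omega

lemma fib_ge_pow (n : ℕ) : 2 ^ (n / 2) ≤ Nat.fib (n + 1) := by
  induction n using Nat.twoStepInduction with
  | zero => simp
  | one => simp
  | more n ih1 ih2 =>
    have h1 : Nat.fib (n + 3) = Nat.fib (n + 1) + Nat.fib (n + 2) := Nat.fib_add_two
    have h2 : Nat.fib (n + 1) ≤ Nat.fib (n + 2) := Nat.fib_mono (by omega)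
    have h3 : (n + 2) / 2 = n / 2 + 1 := by omega
    rw [h1, h3, pow_succ]
    omega

lemma ell_ge (n : ℕ) : n / 8 + 1 ≤ ell (n + 1) := by
  have h10 : (10:ℕ) ^ (n / 8) ≤ 16 ^ (n / 8) := Nat.pow_le_pow_left (by norm_num) _
  have h16 : (16:ℕ) ^ (n / 8) = 2 ^ (4 * (n / 8)) := by
    rw [pow_mul]; norm_num
  have h2 : (2:ℕ) ^ (4 * (n / 8)) ≤ 2 ^ (n / 2) := Nat.pow_le_pow_right (by norm_num) (by omega)
  have hfib : 10 ^ (n / 8) ≤ Nat.fib (n + 1) := by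
    have := fib_ge_pow n; omega
  have hlt : Nat.fib (n + 1) < 10 ^ (ell (n + 1)) :=
    Nat.lt_base_pow_length_digits (by norm_num)
  have : 10 ^ (n / 8) < 10 ^ (ell (n + 1)) := lt_of_le_of_lt hfib hlt
  have := (Nat.pow_lt_pow_iff_right (by norm_num : 1 < 10)).mp this
  omega

lemma LL_eq_sum_range (m : ℕ) : LL m = ∑ n ∈ Finset.range m, ell (n + 1) := by
  induction m with
  | zero => simp [LL, CP_zero]
  | succ m ih => rw [LL_succ, Finset.sum_range_succ, ih]

lemma LL_quad (m : ℕ) : m * m ≤ 16 * LL m := by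
  have h1 : ∑ n ∈ Finset.range m, (2 * n + 2) ≤ ∑ n ∈ Finset.range m, 16 * ell (n + 1) := by
    refine Finset.sum_le_sum fun n _ => ?_
    have := ell_ge n
    omega
  have h2 : ∑ n ∈ Finset.range m, (2 * n + 2) = 2 * (∑ n ∈ Finset.range m, n) + 2 * m := by
    rw [Finset.sum_add_distrib, Finset.mul_sum, Finset.sum_const, Finset.card_range]
    ring
  have h3 : (∑ n ∈ Finset.range m, n) * 2 = m * (m - 1) := Finset.sum_range_id_mul_two m
  have h4 : ∑ n ∈ Finset.range m, 16 * ell (n + 1) = 16 * LL m := by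
    rw [LL_eq_sum_range, Finset.mul_sum]
  rcases Nat.eq_zero_or_pos m with rfl | hm
  · simp
  obtain ⟨j, rfl⟩ : ∃ j, m = j + 1 := ⟨m - 1, by omega⟩
  have h5 : (j + 1) * (j + 1) = (j + 1) * ((j+1) - 1) + (j + 1) := by
    simp only [Nat.add_sub_cancel]
    ring
  omega

lemma LL_add_le (m : ℕ) : ∀ j, LL (m + j) ≤ LL m + j * (m + j) := by
  intro j
  induction j with
  | zero => simp
  | succ j ih =>
    rw [show m + (j + 1) = (m + j) + 1 by ring, LL_succ]
    have h1 := ell_le (m + j + 1)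
    have h2 : j * (m + j) ≤ j * (m + j + 1) := Nat.mul_le_mul_left _ (by omega)
    have h3 : (j+1) * (m + (j + 1)) = j * (m + j + 1) + (m + j + 1) := by ring
    have h4 : (j+1) * (m + j + 1) = j * (m + j + 1) + (m + j + 1) := by ring
    omega

lemma LL_eq_sum_Icc (m : ℕ) : LL m = ∑ n ∈ Finset.Icc 1 m, ell n := by
  induction m with
  | zero => simp [LL, CP_zero]
  | succ m ih =>
    rw [LL_succ, Finset.sum_Icc_succ_top (by omega), ih]


lemma count_eq_occ (w : List ℕ) (k : ℕ) (hwk : w.length = k) (hk : 1 ≤ k) (M : ℕ) :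
    ((Finset.range M).filter fun i =>
      (List.range k).map (fun j => concatStream 10 (fun n => Nat.fib n) (i + j)) = w).card
    = occ w ((CP (M + k)).take (M + k - 1)) := by
  set T := (CP (M + k)).take (M + k - 1) with hT
  have hLLMk : M + k ≤ LL (M + k) := LL_ge _
  have hCPlen : (CP (M + k)).length = LL (M + k) := rfl
  have hTlen : T.length = M + k - 1 := by
    rw [hT, List.length_take]
    omega
  rw [occ_eq_card, hwk, hTlen, show M + k - 1 + 1 - k = M by omega]
  congr 1
  apply Finset.filter_congr
  intro i hi
  rw [Finset.mem_range] at hi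
  have hik : i + k ≤ T.length := by omega
  rw [← window_eq_take T k i hik]
  have hmap : (List.range k).map (fun j => concatStream 10 (fun n => Nat.fib n) (i + j))
      = (List.range k).map (fun j => T.getD (i + j) 0) := by
    apply List.map_congr_left
    intro j hj
    rw [List.mem_range] at hj
    have h1 : i + j < T.length := by omega
    have h2 : i + j < LL (M + k) := by omega
    rw [stream_eq (i + j) (M + k) h2]
    exact getD_of_prefix (List.take_prefix _ _) h1
  rw [hmap]

lemma occ_nil (w : List ℕ) (hw : 1 ≤ w.length) : occ w [] = 0 := by
  simp [occ, Nat.sub_eq_zero_of_le hw]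

lemma sum_occ_le (w : List ℕ) (hw : 1 ≤ w.length) (m : ℕ) :
    ∑ n ∈ Finset.Icc 1 m, occ w (blk n) ≤ occ w (CP m) := by
  induction m with
  | zero => simp [CP_zero, occ_nil w hw]
  | succ m ih =>
    rw [Finset.sum_Icc_succ_top (by omega), CP_succ]
    calc (∑ n ∈ Finset.Icc 1 m, occ w (blk n)) + occ w (blk (m + 1))
        ≤ occ w (CP m) + occ w (blk (m + 1)) := by omega
      _ ≤ occ w (CP m ++ blk (m + 1)) := occ_append_ge w _ _ hw

lemma occ_le_sum (w : List ℕ) (hw : 1 ≤ w.length) (m : ℕ) :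
    occ w (CP m) ≤ (∑ n ∈ Finset.Icc 1 m, occ w (blk n)) + m * w.length := by
  induction m with
  | zero => simp [CP_zero, occ_nil w hw]
  | succ m ih =>
    rw [Finset.sum_Icc_succ_top (by omega), CP_succ]
    have h1 := occ_append_le w (CP m) (blk (m + 1)) hw
    have h2 : (m + 1) * w.length = m * w.length + w.length := by ring
    omega


set_option maxHeartbeats 2000000 in
/-- If for every `ε > 0` and `k ≥ 1` the number of `n ≤ m` such that `F n` is
not `(ε,k)`-normal in base 10 is `o(m)`, then the concatenated Fibonacci
constant `0.F₁F₂F₃⋯` is normal in base 10. -/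
theorem fib_concatenation_normal_of_eps_k_normal
    (h : ∀ ε : ℝ, 0 < ε → ∀ k : ℕ, 1 ≤ k →
      Tendsto
        (fun m : ℕ =>
          (((Finset.Icc 1 m).filter fun n => ¬ EpsKNormal 10 ε k (Nat.fib n)).card : ℝ) /
            (m : ℝ))
        atTop (nhds 0)) :
    StreamNormal 10 (concatStream 10 fun n => Nat.fib n) := by
  intro k hk w hwk hwd
  set q : ℝ := (((10:ℕ):ℝ) ^ k)⁻¹ with hqdef
  have hqpow : (1:ℝ) ≤ ((10:ℕ):ℝ) ^ k := one_le_pow₀ (by norm_num)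
  have hq0 : 0 < q := by rw [hqdef]; positivity
  have hq1 : q ≤ 1 := by rw [hqdef]; exact inv_le_one_of_one_le₀ hqpow
  rw [Metric.tendsto_atTop]
  intro ε₀ hε₀
  set ε := min (ε₀ / 3) (q / 2) with hεdef
  have hε : 0 < ε := lt_min (by linarith) (by linarith)
  have hεq : ε ≤ q / 2 := min_le_right _ _
  have hεε₀ : ε ≤ ε₀ / 3 := min_le_left _ _
  set δ := ε / 160 with hδdef
  have hδ : 0 < δ := by positivity
  obtain ⟨N₁, hN₁⟩ := Metric.tendsto_atTop.mp (h ε hε k hk) δ hδ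
  have hBad : ∀ j : ℕ, N₁ ≤ j → 1 ≤ j →
      (((Finset.Icc 1 j).filter fun n => ¬ EpsKNormal 10 ε k (Nat.fib n)).card : ℝ) ≤ δ * j := by
    intro j h1 h2
    have hd := hN₁ j h1
    rw [Real.dist_eq, sub_zero] at hd
    have hj : (0:ℝ) < j := by exact_mod_cast h2
    rw [abs_of_nonneg (by positivity), div_lt_iff₀ hj] at hd
    linarith
  set Kc := ⌈(256 * (k:ℝ)) / ε⌉₊ with hKcdef
  set J := max (max (N₁ + 1) 64) (max (k + 1) (Kc + 1)) with hJdef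
  refine ⟨max (LL J) 1, fun M hM => ?_⟩
  have hM1 : 1 ≤ M := le_trans (le_max_right _ 1) hM
  have hMJ : LL J ≤ M := le_trans (le_max_left _ _) hM
  set m := Nat.findGreatest (fun j => LL j ≤ M) M with hmdef
  have hLL0 : LL 0 ≤ M := by simp [LL, CP_zero]
  have hm1 : LL m ≤ M := Nat.findGreatest_spec (P := fun j => LL j ≤ M) (Nat.zero_le M) hLL0
  have hm2 : M < LL (m + 1) := by
    rcases le_or_gt (m + 1) M with hc | hc
    · by_contra hcon
      push_neg at hcon
      exact Nat.findGreatest_is_greatest (Nat.lt_succ_self m) hc hcon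
    · have := LL_ge (m + 1); omega
  have hmJ : J ≤ m := Nat.le_findGreatest (le_trans (LL_ge J) hMJ) hMJ
  have hJ1 : N₁ + 1 ≤ J := le_trans (le_max_left _ _) (le_max_left _ _)
  have hJ2 : 64 ≤ J := le_trans (le_max_right _ _) (le_max_left _ _)
  have hJ3 : k + 1 ≤ J := le_trans (le_max_left _ _) (le_max_right _ _)
  have hJ4 : Kc + 1 ≤ J := le_trans (le_max_right _ _) (le_max_right _ _)
  have hm64 : 64 ≤ m := by omega
  have hmN₁ : N₁ ≤ m := by omega
  have hmk : k + 1 ≤ m := by omega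
  have hmKc : Kc + 1 ≤ m := by omega
  have hmM : m ≤ M := le_trans (LL_ge m) hm1
  have hw1 : 1 ≤ w.length := by omega
  -- counting bridges
  set Count := ((Finset.range M).filter fun i =>
      (List.range k).map (fun j => concatStream 10 (fun n => Nat.fib n) (i + j)) = w).card
    with hCountdef
  have hocc : Count = occ w ((CP (M + k)).take (M + k - 1)) := count_eq_occ w k hwk hk M
  set T := (CP (M + k)).take (M + k - 1) with hTdef
  have hCPlen : (CP (M + k)).length = LL (M + k) := rfl
  have hLLMk : M + k ≤ LL (M + k) := LL_ge _
  have hTlen : T.length = M + k - 1 := by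
    rw [hTdef, List.length_take]; omega
  have hlow : occ w (CP m) ≤ Count := by
    rw [hocc]
    refine occ_prefix_le w _ _ hw1 ?_
    refine List.prefix_of_prefix_length_le (CP_prefix (show m ≤ M + k by omega))
      (List.take_prefix _ _) ?_
    rw [hTlen]
    show LL m ≤ M + k - 1
    omega
  have hup : Count ≤ occ w (CP (m + k)) := by
    rw [hocc]
    refine occ_prefix_le w _ _ hw1 ?_
    refine List.prefix_of_prefix_length_le (List.take_prefix _ _)
      (CP_prefix (show m + k ≤ M + k by omega)) ?_
    rw [hTlen]
    show M + k - 1 ≤ LL (m + k)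
    have h5 := LL_mono_add (m + 1) (k - 1)
    rw [show m + 1 + (k - 1) = m + k by omega] at h5
    omega
  have hsum_low := sum_occ_le w hw1 m
  have hsum_up := occ_le_sum w hw1 (m + k)
  -- block estimates
  have hblock_good : ∀ n, 1 ≤ n → EpsKNormal 10 ε k (Nat.fib n) →
      (q - ε) * (ell n : ℝ) ≤ (occ w (blk n) : ℝ) ∧
      (occ w (blk n) : ℝ) ≤ (q + ε) * (ell n : ℝ) := by
    intro n hn hgood
    have hD : (0:ℝ) < (ell n : ℝ) := by exact_mod_cast ell_pos n hn
    have habs := hgood w hwk hwd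
    rw [abs_le] at habs
    have h1 : q - ε ≤ (occ w (blk n) : ℝ) / (ell n : ℝ) := by
      have := habs.1
      simp only [blk, ell]
      push_cast
      push_cast at this
      linarith
    have h2 : (occ w (blk n) : ℝ) / (ell n : ℝ) ≤ q + ε := by
      have := habs.2
      simp only [blk, ell]
      push_cast
      push_cast at this
      linarith
    exact ⟨(le_div_iff₀ hD).mp h1, (div_le_iff₀ hD).mp h2⟩
  have hblock_bad : ∀ n, (occ w (blk n) : ℝ) ≤ (ell n : ℝ) := by
    intro n
    have := occ_le_length w (blk n) hw1
    rw [blk_length] at this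
    exact_mod_cast this
  -- summed estimates over Icc 1 j
  have key_up : ∀ j : ℕ, 1 ≤ j → N₁ ≤ j →
      (∑ n ∈ Finset.Icc 1 j, (occ w (blk n) : ℝ)) ≤ (q + ε) * (LL j : ℝ) + δ * j * j := by
    intro j hj hjN
    rw [← Finset.sum_filter_add_sum_filter_not (Finset.Icc 1 j)
      (fun n => EpsKNormal 10 ε k (Nat.fib n))]
    have hgood : (∑ n ∈ (Finset.Icc 1 j).filter (fun n => EpsKNormal 10 ε k (Nat.fib n)),
        (occ w (blk n) : ℝ)) ≤ (q + ε) * (LL j : ℝ) := by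
      calc (∑ n ∈ (Finset.Icc 1 j).filter (fun n => EpsKNormal 10 ε k (Nat.fib n)),
            (occ w (blk n) : ℝ))
          ≤ ∑ n ∈ (Finset.Icc 1 j).filter (fun n => EpsKNormal 10 ε k (Nat.fib n)),
            (q + ε) * (ell n : ℝ) := by
            refine Finset.sum_le_sum fun n hn => ?_
            rw [Finset.mem_filter, Finset.mem_Icc] at hn
            exact (hblock_good n hn.1.1 hn.2).2
        _ ≤ ∑ n ∈ Finset.Icc 1 j, (q + ε) * (ell n : ℝ) := by
            refine Finset.sum_le_sum_of_subset_of_nonneg (Finset.filter_subset _ _)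
              fun n _ _ => ?_
            have h0 : (0:ℝ) ≤ (ell n : ℝ) := by positivity
            exact mul_nonneg (by linarith only [hq0, hε]) h0
        _ = (q + ε) * (LL j : ℝ) := by
            rw [← Finset.mul_sum, LL_eq_sum_Icc]
            push_cast
            ring
    have hbad : (∑ n ∈ (Finset.Icc 1 j).filter (fun n => ¬ EpsKNormal 10 ε k (Nat.fib n)),
        (occ w (blk n) : ℝ)) ≤ δ * j * j := by
      calc (∑ n ∈ (Finset.Icc 1 j).filter (fun n => ¬ EpsKNormal 10 ε k (Nat.fib n)),
            (occ w (blk n) : ℝ))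
          ≤ ∑ n ∈ (Finset.Icc 1 j).filter (fun n => ¬ EpsKNormal 10 ε k (Nat.fib n)), (j:ℝ) := by
            refine Finset.sum_le_sum fun n hn => ?_
            rw [Finset.mem_filter, Finset.mem_Icc] at hn
            refine le_trans (hblock_bad n) ?_
            have h1 := ell_le n
            have : ell n ≤ j := by omega
            exact_mod_cast this
        _ = (((Finset.Icc 1 j).filter (fun n => ¬ EpsKNormal 10 ε k (Nat.fib n))).card : ℝ)
            * (j:ℝ) := by rw [Finset.sum_const]; simp [mul_comm]
        _ ≤ (δ * j) * j := by
            have hj0 : (0:ℝ) ≤ (j:ℝ) := by positivity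
            exact mul_le_mul_of_nonneg_right (hBad j hjN hj) hj0
        _ = δ * j * j := by ring
    linarith
  have key_low :
      (q - ε) * ((LL m : ℝ) - δ * m * m) ≤ ∑ n ∈ Finset.Icc 1 m, (occ w (blk n) : ℝ) := by
    have hqe : 0 ≤ q - ε := by linarith
    rw [← Finset.sum_filter_add_sum_filter_not (Finset.Icc 1 m)
      (fun n => EpsKNormal 10 ε k (Nat.fib n))]
    have hgood : (q - ε) * ((LL m : ℝ) - δ * m * m)
        ≤ ∑ n ∈ (Finset.Icc 1 m).filter (fun n => EpsKNormal 10 ε k (Nat.fib n)),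
          (occ w (blk n) : ℝ) := by
      have hTg : (LL m : ℝ) - δ * m * m
          ≤ ∑ n ∈ (Finset.Icc 1 m).filter (fun n => EpsKNormal 10 ε k (Nat.fib n)),
            (ell n : ℝ) := by
        have hsplit : (∑ n ∈ (Finset.Icc 1 m).filter (fun n => EpsKNormal 10 ε k (Nat.fib n)),
              (ell n : ℝ))
            + (∑ n ∈ (Finset.Icc 1 m).filter (fun n => ¬ EpsKNormal 10 ε k (Nat.fib n)),
              (ell n : ℝ)) = (LL m : ℝ) := by
          rw [Finset.sum_filter_add_sum_filter_not, LL_eq_sum_Icc]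
          push_cast
          ring
        have hbadsum : (∑ n ∈ (Finset.Icc 1 m).filter (fun n => ¬ EpsKNormal 10 ε k (Nat.fib n)),
            (ell n : ℝ)) ≤ δ * m * m := by
          calc (∑ n ∈ (Finset.Icc 1 m).filter (fun n => ¬ EpsKNormal 10 ε k (Nat.fib n)),
              (ell n : ℝ))
              ≤ ∑ n ∈ (Finset.Icc 1 m).filter (fun n => ¬ EpsKNormal 10 ε k (Nat.fib n)),
                (m:ℝ) := by
                refine Finset.sum_le_sum fun n hn => ?_
                rw [Finset.mem_filter, Finset.mem_Icc] at hn
                have h1 := ell_le n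
                have : ell n ≤ m := by omega
                exact_mod_cast this
            _ = (((Finset.Icc 1 m).filter (fun n => ¬ EpsKNormal 10 ε k (Nat.fib n))).card : ℝ)
                * (m:ℝ) := by rw [Finset.sum_const]; simp [mul_comm]
            _ ≤ (δ * m) * m := by
                have hm0 : (0:ℝ) ≤ (m:ℝ) := by positivity
                exact mul_le_mul_of_nonneg_right (hBad m hmN₁ (by omega)) hm0
            _ = δ * m * m := by ring
        linarith
      have hsumocc : (∑ n ∈ (Finset.Icc 1 m).filter (fun n => EpsKNormal 10 ε k (Nat.fib n)),
            (q - ε) * (ell n : ℝ))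
          ≤ ∑ n ∈ (Finset.Icc 1 m).filter (fun n => EpsKNormal 10 ε k (Nat.fib n)),
            (occ w (blk n) : ℝ) := by
        refine Finset.sum_le_sum fun n hn => ?_
        rw [Finset.mem_filter, Finset.mem_Icc] at hn
        exact (hblock_good n hn.1.1 hn.2).1
      calc (q - ε) * ((LL m : ℝ) - δ * m * m)
          ≤ (q - ε) * ∑ n ∈ (Finset.Icc 1 m).filter (fun n => EpsKNormal 10 ε k (Nat.fib n)),
            (ell n : ℝ) := mul_le_mul_of_nonneg_left hTg hqe
        _ = ∑ n ∈ (Finset.Icc 1 m).filter (fun n => EpsKNormal 10 ε k (Nat.fib n)),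
            (q - ε) * (ell n : ℝ) := Finset.mul_sum _ _ _
        _ ≤ _ := hsumocc
    have hbadnonneg : 0 ≤ ∑ n ∈ (Finset.Icc 1 m).filter (fun n => ¬ EpsKNormal 10 ε k (Nat.fib n)),
        (occ w (blk n) : ℝ) := by positivity
    linarith
  -- cast the nat chains
  have hC_low : (q - ε) * ((LL m : ℝ) - δ * m * m) ≤ (Count : ℝ) := by
    refine le_trans key_low ?_
    have : ((∑ n ∈ Finset.Icc 1 m, occ w (blk n) : ℕ) : ℝ) ≤ (Count : ℝ) := by
      exact_mod_cast le_trans hsum_low hlow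
    push_cast at this ⊢
    linarith
  have hC_up : (Count : ℝ) ≤ (q + ε) * (LL (m + k) : ℝ) + δ * (m + k) * (m + k)
      + ((m + k) * k : ℝ) := by
    have hnat : (Count : ℝ) ≤ ((∑ n ∈ Finset.Icc 1 (m + k), occ w (blk n) : ℕ) : ℝ)
        + (((m + k) * w.length : ℕ) : ℝ) := by
      exact_mod_cast le_trans hup hsum_up
    have hku := key_up (m + k) (by omega) (by omega)
    rw [hwk] at hnat
    push_cast at hnat hku ⊢
    linarith
  -- quantitative bounds
  have hquad : (m:ℝ) * m ≤ 16 * M := by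
    have h1 := LL_quad m
    have : m * m ≤ 16 * M := by omega
    exact_mod_cast this
  have hKcm : 256 * (k:ℝ) ≤ ε * m := by
    have h1 : (256 * (k:ℝ)) / ε ≤ (Kc : ℝ) := Nat.le_ceil _
    have h2 : (Kc : ℝ) ≤ (m : ℝ) := by exact_mod_cast (by omega : Kc ≤ m)
    have h3 : 256 * (k:ℝ) ≤ ε * ((256 * (k:ℝ)) / ε) := by
      rw [mul_div_cancel₀ _ (ne_of_gt hε)]
    calc 256 * (k:ℝ) ≤ ε * ((256 * (k:ℝ)) / ε) := h3
      _ ≤ ε * m := mul_le_mul_of_nonneg_left (le_trans h1 h2) hε.le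
  have hmr1 : (1:ℝ) ≤ (m:ℝ) := by exact_mod_cast (by omega : 1 ≤ m)
  have hkr : (k:ℝ) ≤ (m:ℝ) := by exact_mod_cast (by omega : k ≤ m)
  have hkr1 : (1:ℝ) ≤ (k:ℝ) := by exact_mod_cast hk
  have hMr1 : (1:ℝ) ≤ (M:ℝ) := by exact_mod_cast hM1
  have hL1a : (M:ℝ) - (m + 1) ≤ (LL m : ℝ) := by
    have h1 := ell_le (m + 1)
    have h2 := LL_succ m
    have : M ≤ LL m + (m + 1) := by omega
    have := (Nat.cast_le (α := ℝ)).mpr this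
    push_cast at this ⊢
    linarith
  have hL1b : (LL m : ℝ) ≤ (M:ℝ) := by exact_mod_cast hm1
  have hL2 : (LL (m + k) : ℝ) ≤ (M:ℝ) + k * ((m:ℝ) + k) := by
    have h1 := LL_add_le m k
    have : LL (m + k) ≤ M + k * (m + k) := by omega
    have := (Nat.cast_le (α := ℝ)).mpr this
    push_cast at this ⊢
    linarith
  -- final arithmetic
  have hMpos : (0:ℝ) < M := by linarith only [hMr1]
  have hεM : (0:ℝ) ≤ ε * M := by positivity
  have e1 : ε * ((m:ℝ) * m) ≤ ε * (16 * M) := mul_le_mul_of_nonneg_left hquad hε.le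
  have h256 : (256:ℝ) ≤ ε * m := by linarith only [hKcm, hkr1, hε]
  have e2 : 256 * (m:ℝ) ≤ ε * m * m := by
    have := mul_le_mul_of_nonneg_right h256 (by positivity : (0:ℝ) ≤ (m:ℝ))
    linarith only [this]
  have hsmall1 : (m:ℝ) + 1 + δ * m * m ≤ ε * M := by
    rw [hδdef]
    linarith only [e1, e2, hεM, hmr1]
  have hfin1 : -(2 * ε) * M ≤ (Count : ℝ) - q * M := by
    set s : ℝ := ((m:ℝ) + 1) + δ * m * m with hsdef
    have hs0 : (0:ℝ) ≤ s := by rw [hsdef]; positivity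
    have p1 : (q - ε) * ((M:ℝ) - s) ≤ (q - ε) * ((LL m : ℝ) - δ * m * m) := by
      refine mul_le_mul_of_nonneg_left ?_ (by linarith only [hεq, hq0, hε])
      rw [hsdef]
      linarith only [hL1a]
    have p2 : (q - ε) * ((M:ℝ) - s) = q * M - ε * M - (q - ε) * s := by ring
    have p3 : (q - ε) * s ≤ s := mul_le_of_le_one_left hs0 (by linarith only [hq1, hε])
    have hsεM : s ≤ ε * M := hsmall1
    linarith only [hC_low, p1, p2, p3, hsεM]
  have hfin2 : (Count : ℝ) - q * M ≤ 2 * ε * M := by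
    have hq2 : q + ε ≤ 2 := by linarith only [hq1, hεq]
    have hqε0 : (0:ℝ) ≤ q + ε := by linarith only [hq0, hε]
    have y1 : (q + ε) * (LL (m + k) : ℝ) ≤ (q + ε) * ((M:ℝ) + k * ((m:ℝ) + k)) :=
      mul_le_mul_of_nonneg_left hL2 hqε0
    have y1' : (q + ε) * ((M:ℝ) + k * ((m:ℝ) + k))
        = (q + ε) * M + (q + ε) * ((k:ℝ) * ((m:ℝ) + k)) := by ring
    have y1'' : (q + ε) * (M:ℝ) ≤ q * M + ε * M := by
      have : (q + ε) * (M:ℝ) = q * M + ε * M := by ring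
      linarith only [this]
    have hkpos : (0:ℝ) ≤ (k:ℝ) := by positivity
    have hmpos : (0:ℝ) ≤ (m:ℝ) := by positivity
    have hkmk : (0:ℝ) ≤ (k:ℝ) * ((m:ℝ) + k) := by positivity
    have y3 : (q + ε) * ((k:ℝ) * ((m:ℝ) + k)) ≤ 2 * ((k:ℝ) * ((m:ℝ) + k)) :=
      mul_le_mul_of_nonneg_right hq2 hkmk
    have ykk : (k:ℝ) * k ≤ (k:ℝ) * m := mul_le_mul_of_nonneg_left hkr hkpos
    have yexp : (k:ℝ) * ((m:ℝ) + k) = (k:ℝ) * m + (k:ℝ) * k := by ring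
    have ykm256 : 256 * ((k:ℝ) * m) ≤ ε * m * m := by
      have := mul_le_mul_of_nonneg_right hKcm hmpos
      linarith only [this]
    have ykm : (k:ℝ) * m ≤ ε * M / 16 := by linarith only [ykm256, e1]
    have ymk : (m:ℝ) + k ≤ 2 * m := by linarith only [hkr]
    have ysq : ((m:ℝ) + k) * ((m:ℝ) + k) ≤ (2 * m) * (2 * m) :=
      mul_le_mul ymk ymk (by positivity) (by positivity)
    have y5 : δ * (((m:ℝ) + k) * ((m:ℝ) + k)) ≤ ε * (m * m) * (4 / 160) := by
      rw [hδdef]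
      have := mul_le_mul_of_nonneg_left ysq (by positivity : (0:ℝ) ≤ ε / 160)
      calc (ε / 160) * (((m:ℝ) + k) * ((m:ℝ) + k)) ≤ (ε / 160) * ((2 * m) * (2 * m)) := this
        _ = ε * (m * m) * (4 / 160) := by ring
    have y5' : ε * ((m:ℝ) * m) * (4 / 160) ≤ ε * (16 * M) * (4 / 160) := by
      linarith only [e1]
    have hexpand : δ * ((m:ℝ) + k) * ((m:ℝ) + k) = δ * (((m:ℝ) + k) * ((m:ℝ) + k)) := by ring
    have hmk_k : ((m:ℝ) + k) * k = (k:ℝ) * ((m:ℝ) + k) := by ring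
    linarith only [hC_up, y1, y1', y1'', y3, ykk, yexp, ykm, y5, y5', hexpand, hmk_k, hεM]
  have habs : |(Count : ℝ) / M - q| ≤ 2 * ε := by
    have hdiv : (Count : ℝ) / M - q = ((Count : ℝ) - q * M) / M := by
      field_simp
    rw [hdiv, abs_le]
    constructor
    · rw [le_div_iff₀ hMpos]
      linarith only [hfin1]
    · rw [div_le_iff₀ hMpos]
      linarith only [hfin2]
  have hfinal : 2 * ε < ε₀ := by linarith only [hεε₀, hε₀, hε]
  rw [Real.dist_eq]
  calc |(Count : ℝ) / M - q| ≤ 2 * ε := habs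
    _ < ε₀ := hfinal
end

section
/- For the block-constant digit sequence s, every digit d ∈ {0, ..., 9} has asymptotic frequency 1/10 along block boundaries: for each d, the number of positions j < L_N with s_j = d, divided by L_N, tends to 1/10 as N → ∞. In particular, the column-wise concatenation is simply normal in base 10. -/
open Filter

/-- The index `n ≥ 1` of the block containing position `j`: the unique `n ≥ 1`
with `n(n-1)/2 ≤ j < n(n+1)/2`, defined as the least `n ≥ 1` with `j < n(n+1)/2`. -/
def blockOf (j : ℕ) : ℕ :=
  Nat.find (show ∃ n : ℕ, 0 < n ∧ j < n * (n + 1) / 2 from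
    ⟨j + 1, Nat.succ_pos j, by
      have h : (j + 1) * 2 ≤ (j + 1) * (j + 1 + 1) := by nlinarith
      have h2 := (Nat.le_div_iff_mul_le (by norm_num : 0 < 2)).mpr h
      omega⟩)

/-- The block-constant digit sequence: `s j = n mod 10` for the unique `n ≥ 1`
with `n(n-1)/2 ≤ j < n(n+1)/2`; i.e. the concatenation, for `n = 1, 2, 3, …`,
of `n` copies of the digit `n mod 10`. -/
def s (j : ℕ) : ℕ := blockOf j % 10

/-- `L N = N(N+1)/2`, the total length of the first `N` blocks. -/
def L (N : ℕ) : ℕ := N * (N + 1) / 2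

lemma two_L (n : ℕ) : 2 * L n = n * (n + 1) := by
  have h : 2 ∣ n * (n + 1) := (Nat.even_mul_succ_self n).two_dvd
  unfold L; omega

lemma L_succ (n : ℕ) : L (n + 1) = L n + (n + 1) := by
  have h1 := two_L n
  have h2 := two_L (n + 1)
  have : (n+1) * (n+1+1) = n * (n+1) + 2*(n+1) := by ring
  omega

lemma L_mono : Monotone L := by
  intro a b hab
  exact Nat.div_le_div_right (Nat.mul_le_mul hab (by omega))

lemma blockOf_eq {n j : ℕ} (h1 : L n ≤ j) (h2 : j < L (n + 1)) : blockOf j = n + 1 := by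
  unfold blockOf
  rw [Nat.find_eq_iff]
  refine ⟨⟨Nat.succ_pos n, h2⟩, ?_⟩
  intro k hk hp
  have hkn : k ≤ n := by omega
  have h3 : L k ≤ L n := L_mono hkn
  have h4 : j < L k := hp.2
  omega

def F (d N : ℕ) : ℕ := ∑ n ∈ Finset.range (N + 1), if n % 10 = d then n else 0

lemma card_eq (d N : ℕ) :
    ((Finset.range (L N)).filter fun j => s j = d).card = F d N := by
  induction N with
  | zero => simp [L, F]
  | succ N ih =>
    have hsplit : Finset.range (L (N + 1)) =
        Finset.range (L N) ∪ Finset.Ico (L N) (L (N + 1)) := by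
      rw [Finset.range_eq_Ico, Finset.range_eq_Ico]
      exact (Finset.Ico_union_Ico_eq_Ico (Nat.zero_le _) (L_mono (Nat.le_succ N))).symm
    have hdisj : Disjoint ((Finset.range (L N)).filter fun j => s j = d)
        ((Finset.Ico (L N) (L (N + 1))).filter fun j => s j = d) := by
      apply Finset.disjoint_filter_filter
      rw [Finset.range_eq_Ico]
      exact Finset.Ico_disjoint_Ico_consecutive 0 (L N) (L (N + 1))
    rw [hsplit, Finset.filter_union, Finset.card_union_of_disjoint hdisj, ih]
    have hs : ∀ j ∈ Finset.Ico (L N) (L (N + 1)), s j = (N + 1) % 10 := by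
      intro j hj
      rw [Finset.mem_Ico] at hj
      rw [s, blockOf_eq hj.1 hj.2]
    have hcard : ((Finset.Ico (L N) (L (N + 1))).filter fun j => s j = d).card =
        if (N + 1) % 10 = d then N + 1 else 0 := by
      by_cases h : (N + 1) % 10 = d
      · rw [Finset.filter_true_of_mem (fun j hj => by rw [hs j hj, h]),
          Nat.card_Ico, if_pos h, L_succ]
        omega
      · rw [Finset.filter_false_of_mem (fun j hj => by rw [hs j hj]; exact h)]
        simp [h]
    rw [hcard, F, F, Finset.sum_range_succ _ (N + 1)]

lemma decade_sum (d M : ℕ) (hd : d ≤ 9) :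
    ∑ n ∈ Finset.Ico (10 * M + 1) (10 * M + 11), (if n % 10 = d then n else 0) =
      10 * M + (if d = 0 then 10 else d) := by
  have hfil : (Finset.Ico (10 * M + 1) (10 * M + 11)).filter (fun n => n % 10 = d) =
      {10 * M + (if d = 0 then 10 else d)} := by
    ext x
    simp only [Finset.mem_filter, Finset.mem_Ico, Finset.mem_singleton]
    split_ifs with h <;> omega
  rw [← Finset.sum_filter, hfil, Finset.sum_singleton]

lemma F_step (d M : ℕ) (hd : d ≤ 9) :
    F d (10 * (M + 1)) = F d (10 * M) + (10 * M + (if d = 0 then 10 else d)) := by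
  have h1 : 10 * (M + 1) + 1 = (10 * M + 1) + 10 := by ring
  have h2 : F d (10 * (M + 1)) =
      F d (10 * M) + ∑ n ∈ Finset.Ico (10 * M + 1) (10 * M + 11),
        (if n % 10 = d then n else 0) := by
    rw [F, F, Finset.range_eq_Ico,
      (by omega : 10 * (M + 1) + 1 = 10 * M + 11),
      ← Finset.sum_Ico_consecutive _ (Nat.zero_le (10 * M + 1)) (by omega :
        10 * M + 1 ≤ 10 * M + 11), Finset.range_eq_Ico]
  rw [h2, decade_sum d M hd]

lemma F_formula (d M : ℕ) (hd : d ≤ 9) :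
    2 * F d (10 * M) + 10 * M = 10 * M * M + 2 * (if d = 0 then 10 else d) * M := by
  induction M with
  | zero => simp [F]
  | succ M ih =>
    rw [F_step d M hd]
    have h1 : 10 * (M + 1) * (M + 1) = 10 * M * M + 20 * M + 10 := by ring
    have h2 : 2 * (if d = 0 then 10 else d) * (M + 1) =
        2 * (if d = 0 then 10 else d) * M + 2 * (if d = 0 then 10 else d) := by ring
    rw [h1, h2]
    omega

lemma F_mono (d : ℕ) : Monotone (F d) := by
  intro a b hab
  rw [F, F]
  apply Finset.sum_le_sum_of_subset
  exact Finset.range_subset_range.mpr (by omega)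

lemma F_bounds (d N : ℕ) (hd : d ≤ 9) :
    L N ≤ 10 * F d N + 30 * N + 300 ∧ 10 * F d N ≤ L N + 30 * N + 300 := by
  set q := N / 10 with hq
  set c := (if d = 0 then 10 else d) with hc
  have hcb : 1 ≤ c ∧ c ≤ 10 := by rw [hc]; split <;> omega
  have hN1 : 10 * q ≤ N := by omega
  have hN2 : N ≤ 10 * q + 9 := by omega
  have e1 := F_formula d q hd
  have e2 := F_formula d (q + 1) hd
  have e3 := two_L (10 * q)
  have e4 := two_L (10 * q + 10)
  have m1 : F d (10 * q) ≤ F d N := F_mono d hN1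
  have m2 : F d N ≤ F d (10 * (q + 1)) := F_mono d (by omega)
  have m3 : L (10 * q) ≤ L N := L_mono hN1
  have m4 : L N ≤ L (10 * q + 10) := L_mono (by omega)
  have r1 : 10 * (q + 1) * (q + 1) = 10 * q * q + 20 * q + 10 := by ring
  have r2 : 2 * c * (q + 1) = 2 * c * q + 2 * c := by ring
  have r3 : (10 * q) * (10 * q + 1) = 100 * (q * q) + 10 * q := by ring
  have r4 : (10 * q + 10) * (10 * q + 10 + 1) = 100 * (q * q) + 210 * q + 110 := by ring
  have r6 : 2 * c * q ≤ 20 * q := by nlinarith [hcb.2]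
  have r7 : 2 * c ≤ 20 := by omega
  have r8 : 2 * c * q + 0 ≥ 0 := by omega
  rw [← hc] at e1 e2
  constructor <;>
    linarith [e1, e2, e3, e4, m1, m2, m3, m4, r1, r2, r3, r4, r6, r7, hN1, hN2, hcb.1, hcb.2]

lemma L_pos {N : ℕ} (hN : 1 ≤ N) : 0 < L N := by
  have h := two_L N
  have : 2 ≤ N * (N + 1) := by nlinarith
  omega

lemma L_cast (N : ℕ) : (L N : ℝ) = (N : ℝ) * (N + 1) / 2 := by
  have h := two_L N
  have : (2 * L N : ℝ) = (N : ℝ) * (N + 1) := by exact_mod_cast congrArg Nat.cast h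
  linarith

/-- Every digit `d ∈ {0, …, 9}` has asymptotic frequency `1/10` in the
block-constant sequence `s` along block boundaries: the number of positions
`j < L N` with `s j = d`, divided by `L N`, tends to `1/10`.  In particular,
the column-wise concatenation is simply normal in base 10. -/
theorem blockConstant_digit_freq (d : ℕ) (hd : d ≤ 9) :
    Tendsto
      (fun N : ℕ =>
        (((Finset.range (L N)).filter fun j => s j = d).card : ℝ) / (L N : ℝ))
      atTop (nhds (1 / 10)) := by
  set E : ℕ → ℝ := fun N => (30 * (N : ℝ) + 300) / (L N : ℝ) with hE
  have hEtend : Tendsto E atTop (nhds 0) := by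
    apply squeeze_zero' (t₀ := atTop) (g := fun N : ℕ => 660 / (N : ℝ))
    · filter_upwards [eventually_ge_atTop 1] with N hN
      have hL := L_pos hN
      positivity
    · filter_upwards [eventually_ge_atTop 1] with N hN
      have hN' : (1 : ℝ) ≤ (N : ℝ) := by exact_mod_cast hN
      have hLc := L_cast N
      rw [hE]
      simp only
      rw [hLc, div_le_div_iff₀ (by nlinarith) (by nlinarith)]
      nlinarith
    · exact tendsto_const_div_atTop_nhds_zero_nat 660
  have hl : Tendsto (fun N : ℕ => 1 / 10 - E N) atTop (nhds (1 / 10)) := by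
    simpa using tendsto_const_nhds.sub hEtend
  have hu : Tendsto (fun N : ℕ => 1 / 10 + E N) atTop (nhds (1 / 10)) := by
    simpa using tendsto_const_nhds.add hEtend
  apply tendsto_of_tendsto_of_tendsto_of_le_of_le' hl hu
  · filter_upwards [eventually_ge_atTop 1] with N hN
    have hLpos : (0 : ℝ) < (L N : ℝ) := by exact_mod_cast L_pos hN
    rw [card_eq d N]
    have hnat := (F_bounds d N hd).1
    have hcast : (L N : ℝ) ≤ 10 * (F d N : ℝ) + 30 * N + 300 := by exact_mod_cast hnat
    rw [hE]
    simp only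
    rw [sub_le_iff_le_add, ← add_div, div_le_div_iff₀ (by norm_num) hLpos]
    nlinarith
  · filter_upwards [eventually_ge_atTop 1] with N hN
    have hLpos : (0 : ℝ) < (L N : ℝ) := by exact_mod_cast L_pos hN
    rw [card_eq d N]
    have hnat := (F_bounds d N hd).2
    have hcast : 10 * (F d N : ℝ) ≤ (L N : ℝ) + 30 * N + 300 := by exact_mod_cast hnat
    rw [hE]
    simp only
    rw [div_le_iff₀ hLpos]
    have h2 : (30 * (N : ℝ) + 300) / (L N : ℝ) * (L N : ℝ) = 30 * N + 300 :=
      div_mul_cancel₀ _ (ne_of_gt hLpos)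
    nlinarith
end
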